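/- arXiv:1907.05221 — 3 statements merged into one kernel-verified Lean document; each statement's English description precedes it below -/
import Mathlib

section
/- Let (u, v, ρ, s) be a C¹ supersonic solution of the smooth-flow 2D steady full Euler system on U, with flow angle σ, Mach angle A ∈ (0, π/2), α = σ + A, β = σ − A, κ = 2/(γ−1), j = c/(γ(γ−1)s), and ω = u_y − vₓ. Then on U: ∂₊u = κ sin β · ∂₊c + ω cos σ sin A − j sin β · ∂₊s; ∂₋u = −κ sin α · ∂₋c − ω cos σ sin A + j sin α · ∂₋s; ∂₊v = −κ cos β · ∂₊c + ω sin σ sin A + j cos β · ∂₊s; and ∂₋v = κ cos α · ∂₋c − ω sin σ sin A − j cos α · ∂₋s. -/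
open Real

noncomputable section

/-- Partial derivative in the `x` direction. -/
def pdx (f : ℝ × ℝ → ℝ) (p : ℝ × ℝ) : ℝ := fderiv ℝ f p (1, 0)

/-- Partial derivative in the `y` direction. -/
def pdy (f : ℝ × ℝ → ℝ) (p : ℝ × ℝ) : ℝ := fderiv ℝ f p (0, 1)

/-- Directional derivative along the direction with angle `θ p`. -/
def dd (θ : ℝ × ℝ → ℝ) (f : ℝ × ℝ → ℝ) (p : ℝ × ℝ) : ℝ :=
  Real.cos (θ p) * pdx f p + Real.sin (θ p) * pdy f p

/-- Sound speed `c = √(γ s ρ^(γ-1))`. -/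
def sound (γ : ℝ) (ρ s : ℝ × ℝ → ℝ) (p : ℝ × ℝ) : ℝ :=
  Real.sqrt (γ * s p * ρ p ^ (γ - 1))

/-- Flow speed `q = √(u² + v²)`. -/
def speed (u v : ℝ × ℝ → ℝ) (p : ℝ × ℝ) : ℝ :=
  Real.sqrt (u p ^ 2 + v p ^ 2)

/-- Vorticity `ω = u_y − vₓ`. -/
def vort (u v : ℝ × ℝ → ℝ) (p : ℝ × ℝ) : ℝ := pdy u p - pdx v p

/-- `j = c/(γ(γ−1)s)`. -/
def jay (γ : ℝ) (ρ s : ℝ × ℝ → ℝ) (p : ℝ × ℝ) : ℝ :=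
  sound γ ρ s p / (γ * (γ - 1) * s p)

/-- `κ = 2/(γ−1)`. -/
def kap (γ : ℝ) : ℝ := 2 / (γ - 1)

/-! Since `c² = γ s ρ^(γ-1)`, both `τ ∇p` and `c² ∇ρ / ρ` are combinations of `c ∇c` and `c ∇s`
with coefficients `κ` and `j`. Substituting this into the momentum and mass equations and
dividing by `q` (resp. `c q`) gives four relations along the streamline direction `σ`:
the momentum equations, `sin A · div (u, v) + κ ∂_σ c = 0`, and `∂_σ s = 0`. The
characteristic identities are linear combinations of these with trigonometric coefficients. -/

section Thermodynamics

variable {γ : ℝ} {ρ s : ℝ × ℝ → ℝ} {p : ℝ × ℝ}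

theorem kap_mul_sub_one (hγ : γ ≠ 1) : kap γ * (γ - 1) = 2 := by
  rw [kap]
  field_simp [sub_ne_zero.mpr hγ]

theorem sound_sq (hγ : 0 < γ) (hρp : 0 < ρ p) (hsp : 0 < s p) :
    sound γ ρ s p ^ 2 = γ * s p * ρ p ^ (γ - 1) :=
  Real.sq_sqrt (by positivity)

theorem sound_pos (hγ : 0 < γ) (hρp : 0 < ρ p) (hsp : 0 < s p) : 0 < sound γ ρ s p :=
  Real.sqrt_pos.mpr (by positivity)

theorem jay_mul_sound_mul_sub_one (hγ : 1 < γ) (hρp : 0 < ρ p) (hsp : 0 < s p) :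
    jay γ ρ s p * sound γ ρ s p * (γ - 1) = ρ p ^ (γ - 1) := by
  have hγ1 : γ - 1 ≠ 0 := (sub_pos.mpr hγ).ne'
  rw [jay]
  field_simp
  linear_combination sound_sq (zero_lt_one.trans hγ) hρp hsp

theorem two_mul_sound_mul_fderiv_sound (hγ : 0 < γ) (hρ : DifferentiableAt ℝ ρ p)
    (hs : DifferentiableAt ℝ s p) (hρp : 0 < ρ p) (hsp : 0 < s p) (e : ℝ × ℝ) :
    2 * sound γ ρ s p * fderiv ℝ (sound γ ρ s) p e =
      γ * ρ p ^ (γ - 1) * fderiv ℝ s p e +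
        (γ - 1) * sound γ ρ s p ^ 2 / ρ p * fderiv ℝ ρ p e := by
  have hsound : HasFDerivAt (sound γ ρ s)
      ((1 / (2 * sound γ ρ s p)) • ((γ * s p) • (((γ - 1) * ρ p ^ (γ - 1 - 1)) • fderiv ℝ ρ p)
        + ρ p ^ (γ - 1) • γ • fderiv ℝ s p)) p :=
    ((hs.hasFDerivAt.const_mul γ).fun_mul
      (hρ.hasFDerivAt.rpow_const (Or.inl hρp.ne'))).sqrt (by positivity)
  have hρpow : ρ p ^ (γ - 1) = ρ p ^ (γ - 1 - 1) * ρ p := by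
    rw [← Real.rpow_add_one hρp.ne', sub_add_cancel]
  have hc := (sound_pos hγ hρp hsp).ne'
  simp only [hsound.fderiv, add_apply, smul_apply, smul_eq_mul]
  rw [sound_sq hγ hρp hsp, hρpow]
  field_simp
  ring

theorem sound_sq_mul_fderiv_density (hγ : 1 < γ) (hρ : DifferentiableAt ℝ ρ p)
    (hs : DifferentiableAt ℝ s p) (hρp : 0 < ρ p) (hsp : 0 < s p) (e : ℝ × ℝ) :
    sound γ ρ s p ^ 2 * ((ρ p)⁻¹ * fderiv ℝ ρ p e) =
      sound γ ρ s p * (kap γ * fderiv ℝ (sound γ ρ s) p e - γ * jay γ ρ s p * fderiv ℝ s p e) := by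
  linear_combination
    -(kap γ / 2) * two_mul_sound_mul_fderiv_sound (zero_lt_one.trans hγ) hρ hs hρp hsp e
    + (kap γ * γ * fderiv ℝ s p e / 2) * jay_mul_sound_mul_sub_one hγ hρp hsp
    - (sound γ ρ s p ^ 2 * (ρ p)⁻¹ * fderiv ℝ ρ p e / 2
        + γ * jay γ ρ s p * sound γ ρ s p * fderiv ℝ s p e / 2) * kap_mul_sub_one hγ.ne'

theorem inv_density_mul_fderiv_pressure (hγ : 1 < γ) (hρ : DifferentiableAt ℝ ρ p)
    (hs : DifferentiableAt ℝ s p) (hρp : 0 < ρ p) (hsp : 0 < s p) (e : ℝ × ℝ) :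
    (ρ p)⁻¹ * fderiv ℝ (fun q => s q * ρ q ^ γ) p e =
      sound γ ρ s p * (kap γ * fderiv ℝ (sound γ ρ s) p e - jay γ ρ s p * fderiv ℝ s p e) := by
  have hpressure := hs.hasFDerivAt.fun_mul (hρ.hasFDerivAt.rpow_const (p := γ) (Or.inl hρp.ne'))
  have hρpow : ρ p ^ γ = ρ p ^ (γ - 1) * ρ p := by
    rw [← Real.rpow_add_one hρp.ne', sub_add_cancel]
  simp only [hpressure.fderiv, add_apply, smul_apply, smul_eq_mul]
  rw [hρpow]
  linear_combination sound_sq_mul_fderiv_density hγ hρ hs hρp hsp e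
    - (ρ p)⁻¹ * fderiv ℝ ρ p e * sound_sq (zero_lt_one.trans hγ) hρp hsp
    - fderiv ℝ s p e * jay_mul_sound_mul_sub_one hγ hρp hsp
    + ρ p ^ (γ - 1) * fderiv ℝ s p e * inv_mul_cancel₀ hρp.ne'

end Thermodynamics

section Flow

variable {γ : ℝ} {u v ρ s σ A : ℝ × ℝ → ℝ} {p : ℝ × ℝ}

theorem euler_streamline_relations (hγ : 1 < γ) (hu : DifferentiableAt ℝ u p)
    (hv : DifferentiableAt ℝ v p) (hρ : DifferentiableAt ℝ ρ p) (hs : DifferentiableAt ℝ s p)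
    (hρp : 0 < ρ p) (hsp : 0 < s p)
    (hmass : pdx (fun q => ρ q * u q) p + pdy (fun q => ρ q * v q) p = 0)
    (hmomx : u p * pdx u p + v p * pdy u p + (ρ p)⁻¹ * pdx (fun q => s q * ρ q ^ γ) p = 0)
    (hmomy : u p * pdx v p + v p * pdy v p + (ρ p)⁻¹ * pdy (fun q => s q * ρ q ^ γ) p = 0)
    (hent : u p * pdx s p + v p * pdy s p = 0) (hq : speed u v p ≠ 0)
    (huσ : u p = speed u v p * Real.cos (σ p)) (hvσ : v p = speed u v p * Real.sin (σ p))
    (hsinA : Real.sin (A p) = sound γ ρ s p / speed u v p) :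
    dd σ u p + Real.sin (A p) * (kap γ * pdx (sound γ ρ s) p - jay γ ρ s p * pdx s p) = 0 ∧
    dd σ v p + Real.sin (A p) * (kap γ * pdy (sound γ ρ s) p - jay γ ρ s p * pdy s p) = 0 ∧
    Real.sin (A p) * (pdx u p + pdy v p) + kap γ * dd σ (sound γ ρ s) p = 0 ∧
    dd σ s p = 0 := by
  set q := speed u v p
  set c := sound γ ρ s p
  set κ := kap γ
  set j := jay γ ρ s p
  have hc : c = q * Real.sin (A p) := by rw [hsinA]; field_simp
  have hc0 : c ≠ 0 := (sound_pos (zero_lt_one.trans hγ) hρp hsp).ne'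
  have hpx : (ρ p)⁻¹ * pdx (fun q => s q * ρ q ^ γ) p = c * (κ * pdx (sound γ ρ s) p - j * pdx s p) :=
    inv_density_mul_fderiv_pressure hγ hρ hs hρp hsp (1, 0)
  have hpy : (ρ p)⁻¹ * pdy (fun q => s q * ρ q ^ γ) p = c * (κ * pdy (sound γ ρ s) p - j * pdy s p) :=
    inv_density_mul_fderiv_pressure hγ hρ hs hρp hsp (0, 1)
  have hρx : c ^ 2 * ((ρ p)⁻¹ * pdx ρ p) = c * (κ * pdx (sound γ ρ s) p - γ * j * pdx s p) :=
    sound_sq_mul_fderiv_density hγ hρ hs hρp hsp (1, 0)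
  have hρy : c ^ 2 * ((ρ p)⁻¹ * pdy ρ p) = c * (κ * pdy (sound γ ρ s) p - γ * j * pdy s p) :=
    sound_sq_mul_fderiv_density hγ hρ hs hρp hsp (0, 1)
  have hmass' : ρ p * (pdx u p + pdy v p) + (u p * pdx ρ p + v p * pdy ρ p) = 0 := by
    simp only [pdx, pdy, fderiv_fun_mul hρ hu, fderiv_fun_mul hρ hv, add_apply, smul_apply,
      smul_eq_mul] at hmass ⊢
    linear_combination hmass
  refine ⟨mul_left_cancel₀ hq ?_, mul_left_cancel₀ hq ?_,
    mul_left_cancel₀ (mul_ne_zero hc0 hq) ?_, mul_left_cancel₀ hq ?_⟩ <;> simp only [dd]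
  · linear_combination hmomx - hpx - pdx u p * huσ - pdy u p * hvσ
      - (κ * pdx (sound γ ρ s) p - j * pdx s p) * hc
  · linear_combination hmomy - hpy - pdx v p * huσ - pdy v p * hvσ
      - (κ * pdy (sound γ ρ s) p - j * pdy s p) * hc
  · linear_combination (c ^ 2 * (ρ p)⁻¹) * hmass' - u p * hρx - v p * hρy + c * γ * j * hent
      - c ^ 2 * (pdx u p + pdy v p) * inv_mul_cancel₀ hρp.ne'
      - c * κ * pdx (sound γ ρ s) p * huσ - c * κ * pdy (sound γ ρ s) p * hvσ
      - c * (pdx u p + pdy v p) * hc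
  · linear_combination hent - pdx s p * huσ - pdy s p * hvσ

end Flow

section Characteristics

variable {σ A κ j ux uy vx vy cx cy sx sy : ℝ}

theorem plus_characteristic_eqs
    (h₁ : cos σ * ux + sin σ * uy + sin A * (κ * cx - j * sx) = 0)
    (h₂ : cos σ * vx + sin σ * vy + sin A * (κ * cy - j * sy) = 0)
    (h₃ : sin A * (ux + vy) + κ * (cos σ * cx + sin σ * cy) = 0)
    (h₄ : cos σ * sx + sin σ * sy = 0) :
    (cos (σ + A) * ux + sin (σ + A) * uy =
      κ * sin (σ - A) * (cos (σ + A) * cx + sin (σ + A) * cy) + (uy - vx) * cos σ * sin A -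
        j * sin (σ - A) * (cos (σ + A) * sx + sin (σ + A) * sy)) ∧
    (cos (σ + A) * vx + sin (σ + A) * vy =
      -κ * cos (σ - A) * (cos (σ + A) * cx + sin (σ + A) * cy) + (uy - vx) * sin σ * sin A +
        j * cos (σ - A) * (cos (σ + A) * sx + sin (σ + A) * sy)) := by
  have hσ := sin_sq_add_cos_sq σ
  have hA := sin_sq_add_cos_sq A
  rw [cos_add, sin_add, cos_sub, sin_sub]
  constructor
  · linear_combination cos A * h₁ + sin A * h₂ - sin σ * h₃ + j * sin σ * h₄
      + (κ * sin A * cos A * cx + κ * sin A ^ 2 * cy - j * sin A * cos A * sx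
        - j * sin A ^ 2 * sy) * hσ
      + (-(κ * sin σ * cos σ * cx) - κ * sin σ ^ 2 * cy + j * sin σ * cos σ * sx
        + j * sin σ ^ 2 * sy) * hA
  · linear_combination -sin A * h₁ + cos A * h₂ + cos σ * h₃ - j * cos σ * h₄
      + (-(κ * sin A ^ 2 * cx) + κ * sin A * cos A * cy + j * sin A ^ 2 * sx
        - j * sin A * cos A * sy) * hσ
      + (κ * cos σ ^ 2 * cx + κ * sin σ * cos σ * cy - j * cos σ ^ 2 * sx
        - j * sin σ * cos σ * sy) * hA

/-- The streamline relations are invariant under `(A, κ, j) ↦ (-A, -κ, -j)`, which exchanges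
the two families of characteristics. -/
theorem minus_characteristic_eqs
    (h₁ : cos σ * ux + sin σ * uy + sin A * (κ * cx - j * sx) = 0)
    (h₂ : cos σ * vx + sin σ * vy + sin A * (κ * cy - j * sy) = 0)
    (h₃ : sin A * (ux + vy) + κ * (cos σ * cx + sin σ * cy) = 0)
    (h₄ : cos σ * sx + sin σ * sy = 0) :
    (cos (σ - A) * ux + sin (σ - A) * uy =
      -κ * sin (σ + A) * (cos (σ - A) * cx + sin (σ - A) * cy) - (uy - vx) * cos σ * sin A +
        j * sin (σ + A) * (cos (σ - A) * sx + sin (σ - A) * sy)) ∧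
    (cos (σ - A) * vx + sin (σ - A) * vy =
      κ * cos (σ + A) * (cos (σ - A) * cx + sin (σ - A) * cy) - (uy - vx) * sin σ * sin A -
        j * cos (σ + A) * (cos (σ - A) * sx + sin (σ - A) * sy)) := by
  have h₁' : cos σ * ux + sin σ * uy + sin (-A) * (-κ * cx - -j * sx) = 0 := by
    rw [sin_neg]; linear_combination h₁
  have h₂' : cos σ * vx + sin σ * vy + sin (-A) * (-κ * cy - -j * sy) = 0 := by
    rw [sin_neg]; linear_combination h₂
  have h₃' : sin (-A) * (ux + vy) + -κ * (cos σ * cx + sin σ * cy) = 0 := by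
    rw [sin_neg]; linear_combination -h₃
  obtain ⟨hu, hv⟩ := plus_characteristic_eqs h₁' h₂' h₃' h₄
  simp only [sin_neg, ← sub_eq_add_neg, sub_neg_eq_add] at hu hv
  exact ⟨by linear_combination hu, by linear_combination hv⟩

end Characteristics

theorem stmt_6_general (γ : ℝ) (hγ : 1 < γ) (U : Set (ℝ × ℝ)) (hU : IsOpen U)
    (u v ρ s σ A : ℝ × ℝ → ℝ)
    (hu : ContDiffOn ℝ 1 u U) (hv : ContDiffOn ℝ 1 v U)
    (hρ : ContDiffOn ℝ 1 ρ U) (hs : ContDiffOn ℝ 1 s U)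
    (hρpos : ∀ p ∈ U, 0 < ρ p) (hspos : ∀ p ∈ U, 0 < s p)
    (hmass : ∀ p ∈ U, pdx (fun q => ρ q * u q) p + pdy (fun q => ρ q * v q) p = 0)
    (hmomx : ∀ p ∈ U,
      u p * pdx u p + v p * pdy u p + (ρ p)⁻¹ * pdx (fun q => s q * ρ q ^ γ) p = 0)
    (hmomy : ∀ p ∈ U,
      u p * pdx v p + v p * pdy v p + (ρ p)⁻¹ * pdy (fun q => s q * ρ q ^ γ) p = 0)
    (hent : ∀ p ∈ U, u p * pdx s p + v p * pdy s p = 0)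
    (hsup : ∀ p ∈ U, (sound γ ρ s p) ^ 2 < u p ^ 2 + v p ^ 2)
    (huσ : ∀ p ∈ U, u p = speed u v p * Real.cos (σ p))
    (hvσ : ∀ p ∈ U, v p = speed u v p * Real.sin (σ p))
    (hsinA : ∀ p ∈ U, Real.sin (A p) = sound γ ρ s p / speed u v p)
    :
    ∀ p ∈ U,
      (dd (fun q => σ q + A q) u p =
        kap γ * Real.sin (σ p - A p) * dd (fun q => σ q + A q) (sound γ ρ s) p +
        vort u v p * Real.cos (σ p) * Real.sin (A p) -
        jay γ ρ s p * Real.sin (σ p - A p) * dd (fun q => σ q + A q) s p) ∧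
      (dd (fun q => σ q - A q) u p =
        -(kap γ) * Real.sin (σ p + A p) * dd (fun q => σ q - A q) (sound γ ρ s) p -
        vort u v p * Real.cos (σ p) * Real.sin (A p) +
        jay γ ρ s p * Real.sin (σ p + A p) * dd (fun q => σ q - A q) s p) ∧
      (dd (fun q => σ q + A q) v p =
        -(kap γ) * Real.cos (σ p - A p) * dd (fun q => σ q + A q) (sound γ ρ s) p +
        vort u v p * Real.sin (σ p) * Real.sin (A p) +
        jay γ ρ s p * Real.cos (σ p - A p) * dd (fun q => σ q + A q) s p) ∧
      (dd (fun q => σ q - A q) v p =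
        kap γ * Real.cos (σ p + A p) * dd (fun q => σ q - A q) (sound γ ρ s) p -
        vort u v p * Real.sin (σ p) * Real.sin (A p) -
        jay γ ρ s p * Real.cos (σ p + A p) * dd (fun q => σ q - A q) s p) := by
  intro p hp
  have hdiff : ∀ f : ℝ × ℝ → ℝ, ContDiffOn ℝ 1 f U → DifferentiableAt ℝ f p := fun f hf =>
    (hf.differentiableOn one_ne_zero).differentiableAt (hU.mem_nhds hp)
  have hq : 0 < speed u v p := Real.sqrt_pos.mpr ((sq_nonneg _).trans_lt (hsup p hp))
  obtain ⟨h₁, h₂, h₃, h₄⟩ := euler_streamline_relations hγ (hdiff u hu) (hdiff v hv)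
    (hdiff ρ hρ) (hdiff s hs) (hρpos p hp) (hspos p hp) (hmass p hp) (hmomx p hp) (hmomy p hp)
    (hent p hp) hq.ne' (huσ p hp) (hvσ p hp) (hsinA p hp)
  obtain ⟨hu_plus, hv_plus⟩ := plus_characteristic_eqs h₁ h₂ h₃ h₄
  obtain ⟨hu_minus, hv_minus⟩ := minus_characteristic_eqs h₁ h₂ h₃ h₄
  exact ⟨hu_plus, hu_minus, hv_plus, hv_minus⟩

/-- characteristic equations for the velocity components. -/
theorem stmt_6 (γ : ℝ) (hγ : 1 < γ) (U : Set (ℝ × ℝ)) (hU : IsOpen U)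
    (u v ρ s σ A : ℝ × ℝ → ℝ)
    (hu : ContDiffOn ℝ 1 u U) (hv : ContDiffOn ℝ 1 v U)
    (hρ : ContDiffOn ℝ 1 ρ U) (hs : ContDiffOn ℝ 1 s U)
    (hσ : ContDiffOn ℝ 1 σ U) (hA : ContDiffOn ℝ 1 A U)
    (hρpos : ∀ p ∈ U, 0 < ρ p) (hspos : ∀ p ∈ U, 0 < s p)
    (hmass : ∀ p ∈ U, pdx (fun q => ρ q * u q) p + pdy (fun q => ρ q * v q) p = 0)
    (hmomx : ∀ p ∈ U,
      u p * pdx u p + v p * pdy u p + (ρ p)⁻¹ * pdx (fun q => s q * ρ q ^ γ) p = 0)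
    (hmomy : ∀ p ∈ U,
      u p * pdx v p + v p * pdy v p + (ρ p)⁻¹ * pdy (fun q => s q * ρ q ^ γ) p = 0)
    (hent : ∀ p ∈ U, u p * pdx s p + v p * pdy s p = 0)
    (hsup : ∀ p ∈ U, (sound γ ρ s p) ^ 2 < u p ^ 2 + v p ^ 2)
    (huσ : ∀ p ∈ U, u p = speed u v p * Real.cos (σ p))
    (hvσ : ∀ p ∈ U, v p = speed u v p * Real.sin (σ p))
    (hsinA : ∀ p ∈ U, Real.sin (A p) = sound γ ρ s p / speed u v p)
    (hA0 : ∀ p ∈ U, 0 < A p) (hA2 : ∀ p ∈ U, A p < Real.pi / 2)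
    :
    ∀ p ∈ U,
      (dd (fun q => σ q + A q) u p =
        kap γ * Real.sin (σ p - A p) * dd (fun q => σ q + A q) (sound γ ρ s) p +
        vort u v p * Real.cos (σ p) * Real.sin (A p) -
        jay γ ρ s p * Real.sin (σ p - A p) * dd (fun q => σ q + A q) s p) ∧
      (dd (fun q => σ q - A q) u p =
        -(kap γ) * Real.sin (σ p + A p) * dd (fun q => σ q - A q) (sound γ ρ s) p -
        vort u v p * Real.cos (σ p) * Real.sin (A p) +
        jay γ ρ s p * Real.sin (σ p + A p) * dd (fun q => σ q - A q) s p) ∧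
      (dd (fun q => σ q + A q) v p =
        -(kap γ) * Real.cos (σ p - A p) * dd (fun q => σ q + A q) (sound γ ρ s) p +
        vort u v p * Real.sin (σ p) * Real.sin (A p) +
        jay γ ρ s p * Real.cos (σ p - A p) * dd (fun q => σ q + A q) s p) ∧
      (dd (fun q => σ q - A q) v p =
        kap γ * Real.cos (σ p + A p) * dd (fun q => σ q - A q) (sound γ ρ s) p -
        vort u v p * Real.sin (σ p) * Real.sin (A p) -
        jay γ ρ s p * Real.cos (σ p + A p) * dd (fun q => σ q - A q) s p) :=
  stmt_6_general γ hγ U hU u v ρ s σ A hu hv hρ hs hρpos hspos hmass hmomx hmomy hent hsup huσ hvσ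
    hsinA

end
end

section
/- (Commutator relation along C₀ and C₊.) Let U ⊆ ℝ² be open, σ, A : U → ℝ be C¹ functions with sin A ≠ 0 on U, and set α = σ + A, ∂₀ = cos σ ∂ₓ + sin σ ∂_y, ∂₊ = cos α ∂ₓ + sin α ∂_y. Then for every C² function f : U → ℝ, at every point of U: ∂₀∂₊f − ∂₊∂₀f = (1/sin A)[(cos A · ∂₊σ − ∂₀α) ∂₀f − (∂₊σ − cos A · ∂₀α) ∂₊f]. -/
/-!
Write `∂_θ f = Df(e_θ)` with `e_θ = (cos θ, sin θ)`. Since `d e_θ = dθ · e_{θ + π/2}`, the product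
rule gives `∂_φ ∂_θ f = D²f(e_φ, e_θ) + (∂_φ θ) · Df(e_{θ + π/2})`. In the commutator the second
derivatives cancel by symmetry of `D²f`, leaving `∂₀α · Df(e_{α + π/2}) - ∂₊σ · Df(e_{σ + π/2})`, and
for `sin A ≠ 0` the two normals are expressed in the frame `e_σ, e_α` through
`sin A · e_{σ + π/2} = e_α - cos A · e_σ` and `sin A · e_{α + π/2} = cos A · e_α - e_σ`.
-/

open Real

noncomputable section

def unitVec (θ : ℝ) : ℝ × ℝ := (Real.cos θ, Real.sin θ)

theorem dd_eq_fderiv_unitVec (θ f : ℝ × ℝ → ℝ) (p : ℝ × ℝ) :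
    dd θ f p = fderiv ℝ f p (unitVec (θ p)) := by
  have hsplit : unitVec (θ p) = Real.cos (θ p) • ((1, 0) : ℝ × ℝ) + Real.sin (θ p) • (0, 1) := by
    ext <;> simp [unitVec]
  rw [hsplit, map_add, map_smul, map_smul, smul_eq_mul, smul_eq_mul]
  rfl

theorem sin_smul_unitVec_add_pi_div_two (θ A : ℝ) :
    Real.sin A • unitVec (θ + π / 2) = unitVec (θ + A) - Real.cos A • unitVec θ := by
  simp only [unitVec, Real.cos_add, Real.sin_add]
  ext <;> simp <;> ring

theorem hasFDerivAt_unitVec {θ : ℝ × ℝ → ℝ} {θ' : ℝ × ℝ →L[ℝ] ℝ} {p : ℝ × ℝ}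
    (h : HasFDerivAt θ θ' p) :
    HasFDerivAt (fun q => unitVec (θ q)) (θ'.smulRight (unitVec (θ p + π / 2))) p := by
  refine (h.cos.prodMk h.sin).congr_fderiv ?_
  ext <;> simp [unitVec, Real.cos_add_pi_div_two, Real.sin_add_pi_div_two, mul_comm]

theorem dd_dd (φ : ℝ × ℝ → ℝ) {θ f : ℝ × ℝ → ℝ} {p : ℝ × ℝ} (hθ : DifferentiableAt ℝ θ p)
    (hf : DifferentiableAt ℝ (fderiv ℝ f) p) :
    dd φ (dd θ f) p = fderiv ℝ (fderiv ℝ f) p (unitVec (φ p)) (unitVec (θ p)) +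
      dd φ θ p * fderiv ℝ f p (unitVec (θ p + π / 2)) := by
  have hdd : dd θ f = fun q => fderiv ℝ f q (unitVec (θ q)) :=
    funext (dd_eq_fderiv_unitVec θ f)
  rw [dd_eq_fderiv_unitVec, dd_eq_fderiv_unitVec φ θ, hdd,
    (hf.hasFDerivAt.clm_apply (hasFDerivAt_unitVec hθ.hasFDerivAt)).fderiv]
  simp [add_comm]

theorem dd_dd_sub_dd_dd {θ φ f : ℝ × ℝ → ℝ} {p : ℝ × ℝ} (hθ : DifferentiableAt ℝ θ p)
    (hφ : DifferentiableAt ℝ φ p) (hf : ContDiffAt ℝ 2 f p) :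
    dd φ (dd θ f) p - dd θ (dd φ f) p =
      dd φ θ p * fderiv ℝ f p (unitVec (θ p + π / 2)) -
        dd θ φ p * fderiv ℝ f p (unitVec (φ p + π / 2)) := by
  have hf' : DifferentiableAt ℝ (fderiv ℝ f) p :=
    (hf.fderiv_right le_rfl).differentiableAt one_ne_zero
  rw [dd_dd φ hθ hf', dd_dd θ hφ hf', hf.isSymmSndFDerivAt (by simp)]
  ring

/-- commutator relation between the stream derivative `∂₀` (angle `σ`)
and the characteristic derivative `∂₊` (angle `α = σ + A`), applied to a C² function. -/
theorem stmt_8 (U : Set (ℝ × ℝ)) (hU : IsOpen U) (σ A : ℝ × ℝ → ℝ)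
    (hσ : ContDiffOn ℝ 1 σ U) (hA : ContDiffOn ℝ 1 A U)
    (hsinA : ∀ p ∈ U, Real.sin (A p) ≠ 0)
    (f : ℝ × ℝ → ℝ) (hf : ContDiffOn ℝ 2 f U) :
    ∀ p ∈ U,
      dd σ (dd (fun q => σ q + A q) f) p - dd (fun q => σ q + A q) (dd σ f) p =
        (1 / Real.sin (A p)) *
          ((Real.cos (A p) * dd (fun q => σ q + A q) σ p -
              dd σ (fun q => σ q + A q) p) * dd σ f p -
           (dd (fun q => σ q + A q) σ p -
              Real.cos (A p) * dd σ (fun q => σ q + A q) p) *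
             dd (fun q => σ q + A q) f p) := by
  intro p hp
  have hUp : U ∈ nhds p := hU.mem_nhds hp
  have hσp : DifferentiableAt ℝ σ p := (hσ.contDiffAt hUp).differentiableAt one_ne_zero
  have hAp : DifferentiableAt ℝ A p := (hA.contDiffAt hUp).differentiableAt one_ne_zero
  have hαp : DifferentiableAt ℝ (fun q => σ q + A q) p := hσp.add hAp
  rw [dd_dd_sub_dd_dd hαp hσp (hf.contDiffAt hUp), dd_eq_fderiv_unitVec σ f,
    dd_eq_fderiv_unitVec _ f]
  set L := fderiv ℝ f p
  have hnσ := congrArg L (sin_smul_unitVec_add_pi_div_two (σ p) (A p))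
  have hnα := congrArg L (sin_smul_unitVec_add_pi_div_two (σ p + A p) (-A p))
  simp only [map_sub, map_smul, smul_eq_mul] at hnσ
  simp only [Real.sin_neg, Real.cos_neg, add_neg_cancel_right, map_sub, map_smul, smul_eq_mul] at hnα
  rw [div_mul_eq_mul_div, one_mul, eq_div_iff (hsinA p hp)]
  linear_combination -dd σ (fun q => σ q + A q) p * hnα - dd (fun q => σ q + A q) σ p * hnσ

end
end

section
/- Let (u, v, ρ, s) be a C² supersonic solution of the smooth-flow 2D steady full Euler system on U, with flow angle σ, Mach angle A ∈ (0, π/2), α = σ + A, β = σ − A. Then ∂₀(∂₊s / c^{(γ+1)/(γ−1)}) = 0 on U; that is, the quantity ∂₊s / c^{(γ+1)/(γ−1)} is constant along each stream characteristic. -/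
/-!
Since `u sₓ + v s_y = 0`, `∇s` is orthogonal to the velocity, so
`∂₊s = cos A · ∂₀s + sin A · ∂ₙs = c (u s_y − v sₓ) / q²`; together with
`c^((γ+1)/(γ−1)) = c ρ (γ s)^(1/(γ−1))` this writes the quantity as
`(u s_y − v sₓ) / (ρ q²) · (γ s)^(−1/(γ−1))`. The second factor is a function of `s`, hence
constant along streamlines. The first is `∂ₙs / (ρ q)`, which equals `S'(ψ)` when `s = S(ψ)` for a
stream function `ψ` of the conserved mass flux `(ρu, ρv)`; locally this is verified directly by
differentiating the entropy equation, using the symmetry of `D²s` and conservation of mass.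
-/

open Real

noncomputable section

open Filter Topology

theorem fderiv_apply_eq_pdx_pdy (f : ℝ × ℝ → ℝ) (p : ℝ × ℝ) (a b : ℝ) :
    fderiv ℝ f p (a, b) = a * pdx f p + b * pdy f p := by
  have hab : ((a, b) : ℝ × ℝ) = a • ((1 : ℝ), (0 : ℝ)) + b • ((0 : ℝ), (1 : ℝ)) := by
    ext <;> simp
  rw [hab, map_add, map_smul, map_smul, smul_eq_mul, smul_eq_mul, pdx, pdy]

theorem dd_eq_inv_speed_mul_fderiv {u v σ : ℝ × ℝ → ℝ} (f : ℝ × ℝ → ℝ) {p : ℝ × ℝ}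
    (hq : speed u v p ≠ 0) (hu : u p = speed u v p * cos (σ p))
    (hv : v p = speed u v p * sin (σ p)) :
    dd σ f p = (speed u v p)⁻¹ * fderiv ℝ f p (u p, v p) := by
  rw [fderiv_apply_eq_pdx_pdy, hu, hv, dd]
  field_simp

section Calculus

variable {E : Type*} [NormedAddCommGroup E] [NormedSpace ℝ E] {f g : E → ℝ} {p h : E}

theorem fderiv_mul_apply_eq_zero (hf : DifferentiableAt ℝ f p) (hg : DifferentiableAt ℝ g p)
    (hf0 : fderiv ℝ f p h = 0) (hg0 : fderiv ℝ g p h = 0) :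
    fderiv ℝ (fun q => f q * g q) p h = 0 := by
  simp [fderiv_fun_mul hf hg, hf0, hg0]

theorem fderiv_div_apply_eq_zero (hf : DifferentiableAt ℝ f p) (hg : DifferentiableAt ℝ g p)
    (hgp : g p ≠ 0) (hfg : g p * fderiv ℝ f p h = f p * fderiv ℝ g p h) :
    fderiv ℝ (fun q => f q / g q) p h = 0 := by
  have hinv := (hasDerivAt_inv hgp).comp_hasFDerivAt p hg.hasFDerivAt
  rw [((hf.hasFDerivAt.mul hinv).congr_of_eventuallyEq
    (Eventually.of_forall fun q => div_eq_mul_inv (f q) (g q))).fderiv]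
  simp only [add_apply, smul_apply, smul_eq_mul, Function.comp_apply]
  field_simp
  linear_combination hfg

theorem fderiv_comp_apply_eq_zero {φ : ℝ → ℝ} (hφ : DifferentiableAt ℝ φ (f p))
    (hf : DifferentiableAt ℝ f p) (hf0 : fderiv ℝ f p h = 0) :
    fderiv ℝ (fun q => φ (f q)) p h = 0 := by
  change fderiv ℝ (φ ∘ f) p h = 0
  rw [(hφ.hasDerivAt.comp_hasFDerivAt p hf.hasFDerivAt).fderiv]
  simp [hf0]

end Calculus

/-- `∂ₙs / (ρ q)` with `n = (−v, u) / q`. -/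
def entropyStreamDeriv (u v ρ s : ℝ × ℝ → ℝ) (p : ℝ × ℝ) : ℝ :=
  (u p * pdy s p - v p * pdx s p) / (ρ p * (u p ^ 2 + v p ^ 2))

section Transport

variable {u v ρ s : ℝ × ℝ → ℝ} {p : ℝ × ℝ}

theorem differentiableAt_fderiv_apply (hs : ContDiffAt ℝ 2 s p) (h : ℝ × ℝ) :
    DifferentiableAt ℝ (fun q => fderiv ℝ s q h) p :=
  ((hs.fderiv_right le_rfl).differentiableAt one_ne_zero).clm_apply (differentiableAt_const h)

theorem fderiv_fderiv_apply_velocity (hs : ContDiffAt ℝ 2 s p)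
    (hu : DifferentiableAt ℝ u p) (hv : DifferentiableAt ℝ v p)
    (hent : ∀ᶠ q in 𝓝 p, fderiv ℝ s q (u q, v q) = 0) (h : ℝ × ℝ) :
    fderiv ℝ (fun q => fderiv ℝ s q h) p (u p, v p) =
      -fderiv ℝ s p (fderiv ℝ u p h, fderiv ℝ v p h) := by
  have hDs : DifferentiableAt ℝ (fderiv ℝ s) p :=
    (hs.fderiv_right le_rfl).differentiableAt one_ne_zero
  have hsymm : IsSymmSndFDerivAt ℝ s p :=
    hs.isSymmSndFDerivAt (by simp [minSmoothness_of_isRCLikeNormedField])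
  have hzero : HasFDerivAt (fun q => fderiv ℝ s q (u q, v q)) (0 : ℝ × ℝ →L[ℝ] ℝ) p :=
    (hasFDerivAt_const (0 : ℝ) p).congr_of_eventuallyEq hent
  have hchain := hDs.hasFDerivAt.clm_apply (hu.hasFDerivAt.prodMk hv.hasFDerivAt)
  have key := congrArg (fun L : ℝ × ℝ →L[ℝ] ℝ => L h) (hchain.unique hzero)
  simp only [add_apply, ContinuousLinearMap.comp_apply, ContinuousLinearMap.flip_apply,
    ContinuousLinearMap.prod_apply, zero_apply] at key
  rw [fderiv_clm_apply hDs (differentiableAt_const h)]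
  simp only [fderiv_const_apply, ContinuousLinearMap.comp_zero, zero_add,
    ContinuousLinearMap.flip_apply]
  rw [hsymm]
  linear_combination key

theorem fderiv_entropyStreamDeriv_apply_velocity (hs : ContDiffAt ℝ 2 s p)
    (hu : DifferentiableAt ℝ u p) (hv : DifferentiableAt ℝ v p) (hρ : DifferentiableAt ℝ ρ p)
    (hent : ∀ᶠ q in 𝓝 p, u q * pdx s q + v q * pdy s q = 0)
    (hmass : pdx (fun q => ρ q * u q) p + pdy (fun q => ρ q * v q) p = 0)
    (hM : ρ p * (u p ^ 2 + v p ^ 2) ≠ 0) :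
    fderiv ℝ (entropyStreamDeriv u v ρ s) p (u p, v p) = 0 := by
  have hent' : ∀ᶠ q in 𝓝 p, fderiv ℝ s q (u q, v q) = 0 := by
    simpa only [fderiv_apply_eq_pdx_pdy] using hent
  have hsxx : fderiv ℝ (pdx s) p (u p, v p) = -fderiv ℝ s p (pdx u p, pdx v p) :=
    fderiv_fderiv_apply_velocity hs hu hv hent' (1, 0)
  have hsyy : fderiv ℝ (pdy s) p (u p, v p) = -fderiv ℝ s p (pdy u p, pdy v p) :=
    fderiv_fderiv_apply_velocity hs hu hv hent' (0, 1)
  have hsx : DifferentiableAt ℝ (pdx s) p := differentiableAt_fderiv_apply hs (1, 0)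
  have hsy : DifferentiableAt ℝ (pdy s) p := differentiableAt_fderiv_apply hs (0, 1)
  have hW := (hu.hasFDerivAt.mul hsy.hasFDerivAt).sub (hv.hasFDerivAt.mul hsx.hasFDerivAt)
  have hM' := hρ.hasFDerivAt.mul ((hu.hasFDerivAt.pow 2).add (hv.hasFDerivAt.pow 2))
  have hmass' := hmass
  rw [pdx, pdy, fderiv_fun_mul hρ hu, fderiv_fun_mul hρ hv] at hmass'
  have hE := hent.self_of_nhds
  apply fderiv_div_apply_eq_zero hW.differentiableAt hM'.differentiableAt hM
  rw [hW.fderiv, hM'.fderiv]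
  simp only [add_apply, sub_apply, smul_apply, smul_eq_mul, nsmul_eq_mul, Pi.mul_apply,
    Pi.add_apply, Pi.sub_apply, fderiv_apply_eq_pdx_pdy] at hsxx hsyy hmass' ⊢
  simp only [one_mul, zero_mul, add_zero, zero_add] at hmass'
  linear_combination ρ p * (u p ^ 2 + v p ^ 2) * u p * hsyy
    - ρ p * (u p ^ 2 + v p ^ 2) * v p * hsxx
    + ρ p * ((v p ^ 2 - u p ^ 2) * (pdy u p + pdx v p) + 2 * u p * v p * (pdx u p - pdy v p)) * hE
    - (u p * pdy s p - v p * pdx s p) * (u p ^ 2 + v p ^ 2) * hmass'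

theorem differentiableAt_entropyStreamDeriv (hs : ContDiffAt ℝ 2 s p)
    (hu : DifferentiableAt ℝ u p) (hv : DifferentiableAt ℝ v p) (hρ : DifferentiableAt ℝ ρ p)
    (hM : ρ p * (u p ^ 2 + v p ^ 2) ≠ 0) :
    DifferentiableAt ℝ (entropyStreamDeriv u v ρ s) p := by
  have hsx : DifferentiableAt ℝ (pdx s) p := differentiableAt_fderiv_apply hs (1, 0)
  have hsy : DifferentiableAt ℝ (pdy s) p := differentiableAt_fderiv_apply hs (0, 1)
  unfold entropyStreamDeriv
  fun_prop (disch := exact hM)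

end Transport

theorem dd_add_eq_of_transport {u v σ A s : ℝ × ℝ → ℝ} {p : ℝ × ℝ} {q c : ℝ} (hq : q ≠ 0)
    (hu : u p = q * cos (σ p)) (hv : v p = q * sin (σ p)) (hA : sin (A p) = c / q)
    (hent : u p * pdx s p + v p * pdy s p = 0) :
    dd (fun r => σ r + A r) s p = c * (u p * pdy s p - v p * pdx s p) / q ^ 2 := by
  rw [hu, hv] at hent ⊢
  simp only [dd, cos_add, sin_add, hA]
  field_simp
  linear_combination cos (A p) * hent

theorem sound_rpow {γ : ℝ} {ρ s : ℝ × ℝ → ℝ} {p : ℝ × ℝ} (hγ : 0 < γ) (hγ1 : γ ≠ 1)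
    (hρ : 0 < ρ p) (hs : 0 < s p) :
    sound γ ρ s p ^ ((γ + 1) / (γ - 1)) = sound γ ρ s p * ((γ * s p) ^ (γ - 1)⁻¹ * ρ p) := by
  have hγ1' : γ - 1 ≠ 0 := sub_ne_zero.mpr hγ1
  have hc2 : 0 < γ * s p * ρ p ^ (γ - 1) := by positivity
  have hc : 0 < sound γ ρ s p := Real.sqrt_pos.2 hc2
  have hsplit : (γ + 1) / (γ - 1) = 1 + 2 * (γ - 1)⁻¹ := by field_simp; ring
  have hpow : sound γ ρ s p ^ (2 * (γ - 1)⁻¹) = (γ * s p) ^ (γ - 1)⁻¹ * ρ p := by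
    rw [sound, Real.sqrt_eq_rpow, ← Real.rpow_mul hc2.le,
      show (1 / 2 : ℝ) * (2 * (γ - 1)⁻¹) = (γ - 1)⁻¹ by ring,
      Real.mul_rpow (by positivity) (by positivity), ← Real.rpow_mul hρ.le,
      mul_inv_cancel₀ hγ1', Real.rpow_one]
  rw [hsplit, Real.rpow_add hc, Real.rpow_one, hpow]

theorem dd_add_div_sound_rpow_eq {γ : ℝ} {u v ρ s σ A : ℝ × ℝ → ℝ} {p : ℝ × ℝ} (hγ : 1 < γ)
    (hρ : 0 < ρ p) (hs : 0 < s p) (hq : 0 < speed u v p)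
    (hu : u p = speed u v p * cos (σ p)) (hv : v p = speed u v p * sin (σ p))
    (hA : sin (A p) = sound γ ρ s p / speed u v p)
    (hent : u p * pdx s p + v p * pdy s p = 0) :
    dd (fun r => σ r + A r) s p / sound γ ρ s p ^ ((γ + 1) / (γ - 1)) =
      entropyStreamDeriv u v ρ s p * (γ * s p) ^ (-(γ - 1)⁻¹) := by
  have hc : 0 < sound γ ρ s p := Real.sqrt_pos.2 (by positivity)
  have hq2 : speed u v p ^ 2 = u p ^ 2 + v p ^ 2 := Real.sq_sqrt (by positivity)
  have hq2pos : 0 < u p ^ 2 + v p ^ 2 := hq2 ▸ by positivity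
  rw [dd_add_eq_of_transport hq.ne' hu hv hA hent, sound_rpow (by linarith) hγ.ne' hρ hs, hq2,
    entropyStreamDeriv, Real.rpow_neg (by positivity)]
  field_simp

theorem stmt_10_general (γ : ℝ) (hγ : 1 < γ) (U : Set (ℝ × ℝ)) (hU : IsOpen U)
    (u v ρ s σ A : ℝ × ℝ → ℝ)
    (hu : ContDiffOn ℝ 2 u U) (hv : ContDiffOn ℝ 2 v U)
    (hρ : ContDiffOn ℝ 2 ρ U) (hs : ContDiffOn ℝ 2 s U)
    (hρpos : ∀ p ∈ U, 0 < ρ p) (hspos : ∀ p ∈ U, 0 < s p)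
    (hmass : ∀ p ∈ U, pdx (fun q => ρ q * u q) p + pdy (fun q => ρ q * v q) p = 0)
    (hent : ∀ p ∈ U, u p * pdx s p + v p * pdy s p = 0)
    (hsup : ∀ p ∈ U, (sound γ ρ s p) ^ 2 < u p ^ 2 + v p ^ 2)
    (huσ : ∀ p ∈ U, u p = speed u v p * Real.cos (σ p))
    (hvσ : ∀ p ∈ U, v p = speed u v p * Real.sin (σ p))
    (hsinA : ∀ p ∈ U, Real.sin (A p) = sound γ ρ s p / speed u v p)
    :
    ∀ p ∈ U,
      dd σ (fun q => dd (fun r => σ r + A r) s q /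
        sound γ ρ s q ^ ((γ + 1) / (γ - 1))) p = 0 := by
  intro p hp
  have hpU : U ∈ 𝓝 p := hU.mem_nhds hp
  have hspeed : ∀ p ∈ U, 0 < speed u v p := fun p hp =>
    Real.sqrt_pos.2 ((sq_nonneg _).trans_lt (hsup p hp))
  have hs' := hs.contDiffAt hpU
  have hu' := (hu.contDiffAt hpU).differentiableAt two_ne_zero
  have hv' := (hv.contDiffAt hpU).differentiableAt two_ne_zero
  have hρ' := (hρ.contDiffAt hpU).differentiableAt two_ne_zero
  have hM : ρ p * (u p ^ 2 + v p ^ 2) ≠ 0 :=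
    mul_ne_zero (hρpos p hp).ne' (Real.sqrt_pos.1 (hspeed p hp)).ne'
  have hloc : (fun q => dd (fun r => σ r + A r) s q / sound γ ρ s q ^ ((γ + 1) / (γ - 1))) =ᶠ[𝓝 p]
      fun q => entropyStreamDeriv u v ρ s q * (γ * s q) ^ (-(γ - 1)⁻¹) :=
    eventually_of_mem hpU fun q hq => dd_add_div_sound_rpow_eq hγ (hρpos q hq) (hspos q hq)
      (hspeed q hq) (huσ q hq) (hvσ q hq) (hsinA q hq) (hent q hq)
  have hφ : DifferentiableAt ℝ (fun x => (γ * x) ^ (-(γ - 1)⁻¹)) (s p) :=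
    (differentiableAt_id.const_mul γ).rpow_const (Or.inl (by positivity [hspos p hp]))
  have hs_stream : fderiv ℝ s p (u p, v p) = 0 := by
    rw [fderiv_apply_eq_pdx_pdy]
    exact hent p hp
  rw [dd_eq_inv_speed_mul_fderiv _ (hspeed p hp).ne' (huσ p hp) (hvσ p hp), hloc.fderiv_eq,
    fderiv_mul_apply_eq_zero (g := fun q => (γ * s q) ^ (-(γ - 1)⁻¹))
      (differentiableAt_entropyStreamDeriv hs' hu' hv' hρ' hM)
      (hφ.comp p (hs'.differentiableAt two_ne_zero))
      (fderiv_entropyStreamDeriv_apply_velocity hs' hu' hv' hρ' (eventually_of_mem hpU hent)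
        (hmass p hp) hM)
      (fderiv_comp_apply_eq_zero hφ (hs'.differentiableAt two_ne_zero) hs_stream),
    mul_zero]

/-- `∂₀(∂₊s / c^((γ+1)/(γ−1))) = 0`, i.e. `∂₊s / c^((γ+1)/(γ−1))`
is constant along each stream characteristic. -/
theorem stmt_10 (γ : ℝ) (hγ : 1 < γ) (U : Set (ℝ × ℝ)) (hU : IsOpen U)
    (u v ρ s σ A : ℝ × ℝ → ℝ)
    (hu : ContDiffOn ℝ 2 u U) (hv : ContDiffOn ℝ 2 v U)
    (hρ : ContDiffOn ℝ 2 ρ U) (hs : ContDiffOn ℝ 2 s U)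
    (hσ : ContDiffOn ℝ 1 σ U) (hA : ContDiffOn ℝ 1 A U)
    (hρpos : ∀ p ∈ U, 0 < ρ p) (hspos : ∀ p ∈ U, 0 < s p)
    (hmass : ∀ p ∈ U, pdx (fun q => ρ q * u q) p + pdy (fun q => ρ q * v q) p = 0)
    (hmomx : ∀ p ∈ U,
      u p * pdx u p + v p * pdy u p + (ρ p)⁻¹ * pdx (fun q => s q * ρ q ^ γ) p = 0)
    (hmomy : ∀ p ∈ U,
      u p * pdx v p + v p * pdy v p + (ρ p)⁻¹ * pdy (fun q => s q * ρ q ^ γ) p = 0)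
    (hent : ∀ p ∈ U, u p * pdx s p + v p * pdy s p = 0)
    (hsup : ∀ p ∈ U, (sound γ ρ s p) ^ 2 < u p ^ 2 + v p ^ 2)
    (huσ : ∀ p ∈ U, u p = speed u v p * Real.cos (σ p))
    (hvσ : ∀ p ∈ U, v p = speed u v p * Real.sin (σ p))
    (hsinA : ∀ p ∈ U, Real.sin (A p) = sound γ ρ s p / speed u v p)
    (hA0 : ∀ p ∈ U, 0 < A p) (hA2 : ∀ p ∈ U, A p < Real.pi / 2)
    :
    ∀ p ∈ U,
      dd σ (fun q => dd (fun r => σ r + A r) s q /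
        sound γ ρ s q ^ ((γ + 1) / (γ - 1))) p = 0 :=
  stmt_10_general γ hγ U hU u v ρ s σ A hu hv hρ hs hρpos hspos hmass hent hsup huσ hvσ hsinA

end
end
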